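/- Toy example where delay makes buy and hold strictly better: let X(0), X(1), X(2) be i.i.d. with P(X(k) = 0.8) = P(X(k) = −0.2) = 1/2, let v > 0, and let K = 1/1.8. With one-step execution delay, define the high-frequency trader's account by V₁(0) = V₁(1) = v and V₁(k+1) = V₁(k) + K·(1 + X(k−1))·V₁(k−1)·X(k) for k = 1, 2, and the buy-and-holder's terminal account by Vₙ(3) = (1 + K·(1 + X(0))·((1 + X(1))·(1 + X(2)) − 1))·v. Then E[log Vₙ(3)] > E[log V₁(3)]. -/

import Mathlib

open MeasureTheory ProbabilityTheory Real

/-!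
By independence, `(X 0, X 1, X 2)` is almost surely uniformly distributed on the eight points
of `{0.8, -0.2}³`, so each expected log-wealth is the average of eight explicit logarithms, and
the common factor `v` contributes the same `log v` to both. The comparison thus reduces to
comparing the products of the eight growth factors of the two strategies, a computation with
rational numbers.
-/

noncomputable def delayedAcct (K v : ℝ) (X : ℕ → ℝ) : ℕ → ℝ
  | 0 => v
  | 1 => v
  | (k + 2) => delayedAcct K v X (k + 1)
      + (K * (1 + X k) * delayedAcct K v X k) * X (k + 1)

namespace ProbabilityTheory

variable {Ω ι : Type*} [MeasurableSpace Ω] {μ : Measure Ω} {X : ι → Ω → ℝ} {a b : ℝ}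

theorem iIndepFun.measure_forall_eq_cond [Fintype ι] (hX : iIndepFun X μ)
    (ha : ∀ i, μ {ω | X i ω = a} = 1 / 2) (hb : ∀ i, μ {ω | X i ω = b} = 1 / 2)
    (s : ι → Bool) :
    μ {ω | ∀ i, X i ω = bif s i then a else b} = 2⁻¹ ^ Fintype.card ι := by
  have hprod := hX.measure_inter_preimage_eq_mul Finset.univ
    (sets := fun i => {bif s i then a else b}) fun _ _ => measurableSet_singleton _
  have hhalf : ∀ i, μ (X i ⁻¹' {bif s i then a else b}) = 2⁻¹ := fun i => by
    rw [← one_div]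
    cases s i
    · exact hb i
    · exact ha i
  simp only [Finset.mem_univ, Set.iInter_true, hhalf, Finset.prod_const, Finset.card_univ] at hprod
  convert hprod using 2
  ext ω
  simp

theorem ae_forall_eq_or_eq_of_measure_eq_half [Countable ι] [IsProbabilityMeasure μ]
    (hXm : ∀ i, Measurable (X i)) (hab : a ≠ b)
    (ha : ∀ i, μ {ω | X i ω = a} = 1 / 2) (hb : ∀ i, μ {ω | X i ω = b} = 1 / 2) :
    ∀ᵐ ω ∂μ, ∀ i, X i ω = a ∨ X i ω = b := by
  refine ae_all_iff.2 fun i => ?_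
  have hXa : MeasurableSet {ω | X i ω = a} := hXm i (measurableSet_singleton a)
  have hXb : MeasurableSet {ω | X i ω = b} := hXm i (measurableSet_singleton b)
  have hdisj : Disjoint {ω | X i ω = a} {ω | X i ω = b} :=
    Set.disjoint_left.2 fun ω hωa hωb => hab (hωa.symm.trans hωb)
  refine (ae_mem_iff_measure_eq (hXa.union hXb).nullMeasurableSet).2 ?_
  rw [measure_union hdisj hXb, ha, hb, ENNReal.add_halves, measure_univ]

theorem iIndepFun.integral_comp_eq_average_cond [Fintype ι] [DecidableEq ι]
    [IsProbabilityMeasure μ] (hXm : ∀ i, Measurable (X i)) (hX : iIndepFun X μ) (hab : a ≠ b)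
    (ha : ∀ i, μ {ω | X i ω = a} = 1 / 2) (hb : ∀ i, μ {ω | X i ω = b} = 1 / 2)
    (g : (ι → ℝ) → ℝ) :
    ∫ ω, g (fun i => X i ω) ∂μ =
      2⁻¹ ^ Fintype.card ι * ∑ s : ι → Bool, g (fun i => bif s i then a else b) := by
  set cube : (ι → Bool) → Set Ω := fun s => {ω | ∀ i, X i ω = bif s i then a else b}
  have hcube : ∀ s, MeasurableSet (cube s) := fun s => by
    simp only [cube, Set.ofPred_forall]
    exact .iInter fun i => hXm i (measurableSet_singleton _)
  have hsplit : (fun ω => g (fun i => X i ω)) =ᵐ[μ]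
      fun ω => ∑ s, (cube s).indicator (fun _ => g (fun i => bif s i then a else b)) ω := by
    filter_upwards [ae_forall_eq_or_eq_of_measure_eq_half hXm hab ha hb] with ω hω
    have hmem : ∀ s, ω ∈ cube s ↔ s = fun i => decide (X i ω = a) := fun s => by
      simp only [cube, Set.mem_ofPred_eq, funext_iff]
      refine forall_congr' fun i => ?_
      rcases hω i with h | h <;> cases s i <;> simp [h, hab, hab.symm]
    simp only [Set.indicator_apply, hmem, Finset.sum_ite_eq', Finset.mem_univ, if_true]
    congr 1
    funext i
    rcases hω i with h | h <;> simp [h, hab.symm]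
  rw [integral_congr_ae hsplit,
    integral_finsetSum _ fun s _ => (integrable_const _).indicator (hcube s), Finset.mul_sum]
  refine Finset.sum_congr rfl fun s _ => ?_
  rw [integral_indicator_const _ (hcube s), measureReal_def, hX.measure_forall_eq_cond ha hb s]
  simp

end ProbabilityTheory

theorem Real.sum_log_mul_lt_sum_log_mul {ι : Type*} [Fintype ι] {f g : ι → ℝ} {v : ℝ}
    (hv : 0 < v) (hf : ∀ i, 0 < f i) (hfg : ∏ i, f i < ∏ i, g i) :
    ∑ i, log (f i * v) < ∑ i, log (g i * v) := by
  have hf_prod : 0 < ∏ i, f i := Finset.prod_pos fun i _ => hf i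
  have hg : ∀ i ∈ Finset.univ, g i * v ≠ 0 := fun i hi =>
    mul_ne_zero (Finset.prod_ne_zero_iff.1 (hf_prod.trans hfg).ne' i hi) hv.ne'
  rw [← log_prod fun i _ => (mul_pos (hf i) hv).ne', ← log_prod hg,
    Finset.prod_mul_distrib, Finset.prod_mul_distrib]
  exact log_lt_log (by positivity) (by gcongr)

theorem Fintype.prod_fin_three_arrow {α M : Type*} [Fintype α] [CommMonoid M]
    (f : (Fin 3 → α) → M) : ∏ s, f s = ∏ a, ∏ b, ∏ c, f ![a, b, c] := by
  simp only [← (Fin.consEquiv fun _ => α).prod_comp, Fintype.prod_prod_type, Fintype.prod_unique]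
  rfl

def buyHoldGrowth (K : ℝ) (x : Fin 3 → ℝ) : ℝ :=
  1 + K * (1 + x 0) * ((1 + x 1) * (1 + x 2) - 1)

def highFreqGrowth (K : ℝ) (x : Fin 3 → ℝ) : ℝ :=
  1 + K * (1 + x 0) * x 1 + K * (1 + x 1) * x 2

theorem delayedAcct_three (K v : ℝ) (X : ℕ → ℝ) :
    delayedAcct K v X 3 = highFreqGrowth K (fun i => X i) * v := by
  simp only [delayedAcct, highFreqGrowth, Fin.val_zero, Fin.val_one, Fin.val_two]
  ring

theorem highFreqGrowth_pos (s : Fin 3 → Bool) :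
    0 < highFreqGrowth (1 / 1.8) (fun i => bif s i then 0.8 else -0.2) := by
  simp only [highFreqGrowth]
  cases s 0 <;> cases s 1 <;> cases s 2 <;> norm_num

theorem prod_highFreqGrowth_lt_prod_buyHoldGrowth :
    ∏ s : Fin 3 → Bool, highFreqGrowth (1 / 1.8) (fun i => bif s i then 0.8 else -0.2) <
      ∏ s : Fin 3 → Bool, buyHoldGrowth (1 / 1.8) (fun i => bif s i then 0.8 else -0.2) := by
  simp only [Fintype.prod_fin_three_arrow, Fintype.prod_bool, highFreqGrowth, buyHoldGrowth]
  norm_num [Matrix.cons_val_two, Matrix.tail_cons, Matrix.head_cons]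

/-- **Toy example where delay makes buy and hold strictly better.** Let
`X 0, X 1, X 2` be i.i.d. with `P(X k = 0.8) = P(X k = -0.2) = 1/2`, let
`v > 0`, and take the Kelly fraction `K = 1/1.8` (the largest fraction
consistent with self-financing under one-step delay).  The one-step-delayed
high-frequency trader's account is `V₁ 0 = V₁ 1 = v` and
`V₁ (k+1) = V₁ k + K·(1 + X (k-1))·V₁ (k-1)·X k` for `k = 1, 2`, while the
one-step-delayed buy-and-holder's terminal account is
`Vₙ 3 = (1 + K·(1 + X 0)·((1 + X 1)·(1 + X 2) - 1))·v`.  Then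
`E[log (Vₙ 3)] > E[log (V₁ 3)]`. -/
theorem delayed_buy_hold_beats_high_frequency_toy
    {Ω : Type*} [MeasureSpace Ω] [IsProbabilityMeasure (ℙ : Measure Ω)]
    (X : ℕ → Ω → ℝ) (hmeas : ∀ i, Measurable (X i))
    (hindep : iIndepFun
      (fun i : Fin 3 => X i) ℙ)
    (hmax : ∀ i < 3, ℙ {ω | X i ω = 0.8} = 1 / 2)
    (hmin : ∀ i < 3, ℙ {ω | X i ω = -0.2} = 1 / 2)
    (v : ℝ) (hv : 0 < v) :
    (∫ ω, Real.log
        ((1 + (1 / 1.8) * (1 + X 0 ω) * ((1 + X 1 ω) * (1 + X 2 ω) - 1)) * v) ∂ℙ)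
      > ∫ ω, Real.log (delayedAcct (1 / 1.8) v (fun k => X k ω) 3) ∂ℙ := by
  have hmean (g : (Fin 3 → ℝ) → ℝ) :=
    hindep.integral_comp_eq_average_cond (X := fun i : Fin 3 => X i) (fun i => hmeas i)
      (by norm_num) (fun i => hmax i i.isLt) (fun i => hmin i i.isLt) g
  simp only [delayedAcct_three]
  rw [gt_iff_lt, hmean fun x => log (highFreqGrowth (1 / 1.8) x * v)]
  refine lt_of_lt_of_eq ?_ (hmean fun x => log (buyHoldGrowth (1 / 1.8) x * v)).symm
  exact mul_lt_mul_of_pos_left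
    (sum_log_mul_lt_sum_log_mul hv highFreqGrowth_pos prod_highFreqGrowth_lt_prod_buyHoldGrowth)
    (by positivity)
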